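/- Let P_l be the path on l ≥ 2 vertices and C_m the cycle on m ≥ 3 vertices. Then the forgotten topological index of their subdivision vertex join satisfies F(P_l ∔ C_m) = 8l − 14 + 8m + 12m(l − 1) + (l − 1)(2 + m)³ + 6m(l − 1)² + m(l − 1)³. -/

import Mathlib

open Finset

/-! In `G₁ ∔ G₂` a vertex of `G₁` keeps its degree, a subdivision vertex has degree
`2 + |V(G₂)|`, and a vertex `v` of `G₂` has degree `|E(G₁)| + d_{G₂}(v)`, so
`F(G₁ ∔ G₂) = F(G₁) + |E(G₁)| (2 + |V(G₂)|)³ + ∑ v, (|E(G₁)| + d_{G₂}(v))³`.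
The path `P_l` has two ends of degree 1 and `l - 2` inner vertices of degree 2, whence
`F(P_l) = 8l - 14` and `|E(P_l)| = l - 1`; the cycle `C_m` is 2-regular, so the last sum is
`m (l + 1)³`, which expands to the remaining terms. -/

/-- The subdivision graph `S(G)`: one new vertex inserted on every edge of `G`. -/
def subdivisionGraph {V₁ : Type*} (G : SimpleGraph V₁) : SimpleGraph (V₁ ⊕ G.edgeSet) where
  Adj x y :=
    match x, y with
    | Sum.inl u, Sum.inr e => u ∈ (e : Sym2 V₁)
    | Sum.inr e, Sum.inl u => u ∈ (e : Sym2 V₁)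
    | _, _ => False
  symm := by
    constructor
    rintro (u | e) (v | f) h
    · exact h.elim
    · exact h
    · exact h
    · exact h.elim
  loopless := by constructor; rintro (u | e) h <;> exact h

instance subdivisionGraph.adjDecidable {V₁ : Type*} (G : SimpleGraph V₁) [DecidableEq V₁] :
    DecidableRel (subdivisionGraph G).Adj
  | Sum.inl u, Sum.inr e => inferInstanceAs (Decidable (u ∈ (e : Sym2 V₁)))
  | Sum.inr e, Sum.inl u => inferInstanceAs (Decidable (u ∈ (e : Sym2 V₁)))
  | Sum.inl _, Sum.inl _ => inferInstanceAs (Decidable False)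
  | Sum.inr _, Sum.inr _ => inferInstanceAs (Decidable False)

/-- The subdivision vertex join `G₁ ∔ G₂`: the disjoint union of `S(G₁)` and `G₂`,
with every subdivision (new) vertex of `S(G₁)` joined to every vertex of `G₂`. -/
def subdivisionVertexJoin {V₁ V₂ : Type*} (G₁ : SimpleGraph V₁) (G₂ : SimpleGraph V₂) :
    SimpleGraph (V₁ ⊕ G₁.edgeSet ⊕ V₂) where
  Adj x y :=
    match x, y with
    | Sum.inl u, Sum.inr (Sum.inl e) => u ∈ (e : Sym2 V₁)
    | Sum.inr (Sum.inl e), Sum.inl u => u ∈ (e : Sym2 V₁)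
    | Sum.inr (Sum.inl _), Sum.inr (Sum.inr _) => True
    | Sum.inr (Sum.inr _), Sum.inr (Sum.inl _) => True
    | Sum.inr (Sum.inr u), Sum.inr (Sum.inr v) => G₂.Adj u v
    | _, _ => False
  symm := by
    constructor
    rintro (u | e | u) (v | f | v) h <;> first | exact h.elim | exact h | trivial | exact h.symm
  loopless := by
    constructor
    rintro (u | e | u) h
    · exact h
    · exact h
    · exact G₂.loopless.irrefl u h

instance subdivisionVertexJoin.adjDecidable {V₁ V₂ : Type*} (G₁ : SimpleGraph V₁)
    (G₂ : SimpleGraph V₂) [DecidableEq V₁] [DecidableRel G₂.Adj] :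
    DecidableRel (subdivisionVertexJoin G₁ G₂).Adj
  | Sum.inl u, Sum.inr (Sum.inl e) => inferInstanceAs (Decidable (u ∈ (e : Sym2 V₁)))
  | Sum.inr (Sum.inl e), Sum.inl u => inferInstanceAs (Decidable (u ∈ (e : Sym2 V₁)))
  | Sum.inr (Sum.inl _), Sum.inr (Sum.inr _) => inferInstanceAs (Decidable True)
  | Sum.inr (Sum.inr _), Sum.inr (Sum.inl _) => inferInstanceAs (Decidable True)
  | Sum.inr (Sum.inr u), Sum.inr (Sum.inr v) => inferInstanceAs (Decidable (G₂.Adj u v))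
  | Sum.inl _, Sum.inl _ => inferInstanceAs (Decidable False)
  | Sum.inl _, Sum.inr (Sum.inr _) => inferInstanceAs (Decidable False)
  | Sum.inr (Sum.inr _), Sum.inl _ => inferInstanceAs (Decidable False)
  | Sum.inr (Sum.inl _), Sum.inr (Sum.inl _) => inferInstanceAs (Decidable False)

/-- First Zagreb index `M₁(G) = ∑ v, d(v)²`. -/
def firstZagreb {V : Type*} [Fintype V] (G : SimpleGraph V) [DecidableRel G.Adj] : ℤ :=
  ∑ v, (G.degree v : ℤ) ^ 2

/-- Forgotten topological index `F(G) = ∑ v, d(v)³`. -/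
def forgottenIndex {V : Type*} [Fintype V] (G : SimpleGraph V) [DecidableRel G.Adj] : ℤ :=
  ∑ v, (G.degree v : ℤ) ^ 3

/-- First hyper Zagreb index `HM₁(G) = ∑_{uv ∈ E(G)} (d(u) + d(v))²`. -/
def hyperZagreb {V : Type*} [Fintype V] [DecidableEq V] (G : SimpleGraph V)
    [DecidableRel G.Adj] : ℤ :=
  ∑ e ∈ G.edgeFinset,
    Sym2.lift ⟨fun u v => ((G.degree u : ℤ) + (G.degree v : ℤ)) ^ 2, fun _ _ => by ring⟩ e

/-- Reduced second Zagreb index `RM₂(G) = ∑_{uv ∈ E(G)} (d(u) - 1)(d(v) - 1)`. -/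
def reducedSecondZagreb {V : Type*} [Fintype V] [DecidableEq V] (G : SimpleGraph V)
    [DecidableRel G.Adj] : ℤ :=
  ∑ e ∈ G.edgeFinset,
    Sym2.lift ⟨fun u v => ((G.degree u : ℤ) - 1) * ((G.degree v : ℤ) - 1), fun _ _ => by ring⟩ e

instance pathGraph.adjDecidable (n : ℕ) : DecidableRel (SimpleGraph.pathGraph n).Adj :=
  fun u v => decidable_of_iff (u.val + 1 = v.val ∨ v.val + 1 = u.val)
    SimpleGraph.pathGraph_adj.symm

namespace SimpleGraph

variable {V : Type*} [Fintype V] (G : SimpleGraph V)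

theorem degree_eq_sum_ite [DecidableRel G.Adj] (v : V) :
    G.degree v = ∑ w, if G.Adj v w then 1 else 0 := by
  rw [← card_neighborFinset_eq_degree, neighborFinset_eq_filter, card_filter]

theorem sum_edgeSet_ite_mem_eq_degree [DecidableEq V] [DecidableRel G.Adj] (v : V) :
    ∑ e : G.edgeSet, (if v ∈ (e : Sym2 V) then 1 else 0) = G.degree v := by
  rw [← card_incidenceFinset_eq_degree, incidenceFinset_eq_filter, card_filter,
    sum_subtype _ fun _ => mem_edgeFinset]

theorem sum_ite_mem_edge_eq_two [DecidableEq V] (e : G.edgeSet) :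
    ∑ v, (if v ∈ (e : Sym2 V) then 1 else 0) = 2 := by
  rw [← card_filter, ← Sym2.card_toFinset_of_not_isDiag _ (G.not_isDiag_of_mem_edgeSet e.2)]
  congr 1
  ext; simp [Sym2.mem_toFinset]

section Path

variable {n : ℕ}

theorem pathGraph_degree_zero : (pathGraph (n + 2)).degree 0 = 1 := by
  rw [← card_neighborFinset_eq_degree, card_eq_one]
  refine ⟨1, ?_⟩
  ext v
  simp only [mem_neighborFinset, pathGraph_adj, mem_singleton, Fin.ext_iff, Fin.val_zero,
    Fin.val_one]
  omega

theorem pathGraph_degree_last : (pathGraph (n + 2)).degree (Fin.last (n + 1)) = 1 := by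
  rw [← card_neighborFinset_eq_degree, card_eq_one]
  refine ⟨(Fin.last n).castSucc, ?_⟩
  ext v
  simp only [mem_neighborFinset, pathGraph_adj, mem_singleton, Fin.ext_iff, Fin.val_last,
    Fin.val_castSucc]
  omega

theorem pathGraph_degree_succ_castSucc (k : Fin n) :
    (pathGraph (n + 2)).degree k.castSucc.succ = 2 := by
  rw [← card_neighborFinset_eq_degree, card_eq_two]
  refine ⟨k.castSucc.castSucc, k.succ.succ, ?_, ?_⟩
  · simp only [ne_eq, Fin.ext_iff, Fin.val_castSucc, Fin.val_succ]
    omega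
  · ext v
    simp only [mem_neighborFinset, pathGraph_adj, mem_insert, mem_singleton, Fin.ext_iff,
      Fin.val_castSucc, Fin.val_succ]
    omega

theorem sum_pathGraph_degree {M : Type*} [AddCommMonoid M] (f : ℕ → M) :
    ∑ u, f ((pathGraph (n + 2)).degree u) = 2 • f 1 + n • f 2 := by
  rw [Fin.sum_univ_succ, Fin.sum_univ_castSucc]
  simp only [pathGraph_degree_zero, pathGraph_degree_succ_castSucc, Fin.succ_last,
    pathGraph_degree_last, sum_const, card_univ, Fintype.card_fin]
  abel

theorem card_edgeSet_pathGraph : Fintype.card (pathGraph (n + 2)).edgeSet = n + 1 := by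
  have h := sum_pathGraph_degree (n := n) fun d => d
  rw [sum_degrees_eq_twice_card_edges, edgeFinset_card] at h
  simp only [smul_eq_mul] at h
  omega

theorem forgottenIndex_pathGraph : forgottenIndex (pathGraph (n + 2)) = 8 * n + 2 := by
  rw [forgottenIndex, sum_pathGraph_degree fun d => (d : ℤ) ^ 3]
  push_cast
  ring

end Path

end SimpleGraph

section SubdivisionVertexJoin

variable {V₁ V₂ : Type*} [Fintype V₁] [Fintype V₂] [DecidableEq V₁]
  (G₁ : SimpleGraph V₁) (G₂ : SimpleGraph V₂)
  [DecidableRel G₁.Adj] [DecidableRel G₂.Adj]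

open SimpleGraph

theorem degree_subdivisionVertexJoin_inl (u : V₁) :
    (subdivisionVertexJoin G₁ G₂).degree (.inl u) = G₁.degree u := by
  rw [degree_eq_sum_ite, Fintype.sum_sum_type, Fintype.sum_sum_type]
  simp only [subdivisionVertexJoin, ↓reduceIte, sum_const_zero, add_zero, zero_add]
  exact G₁.sum_edgeSet_ite_mem_eq_degree u

theorem degree_subdivisionVertexJoin_edge (e : G₁.edgeSet) :
    (subdivisionVertexJoin G₁ G₂).degree (.inr (.inl e)) = 2 + Fintype.card V₂ := by
  rw [degree_eq_sum_ite, Fintype.sum_sum_type, Fintype.sum_sum_type]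
  simp only [subdivisionVertexJoin, ↓reduceIte, sum_const_zero, sum_const, card_univ, smul_eq_mul,
    mul_one, zero_add]
  exact congrArg (· + Fintype.card V₂) (G₁.sum_ite_mem_edge_eq_two e)

theorem degree_subdivisionVertexJoin_inr (v : V₂) :
    (subdivisionVertexJoin G₁ G₂).degree (.inr (.inr v)) =
      Fintype.card G₁.edgeSet + G₂.degree v := by
  rw [degree_eq_sum_ite, Fintype.sum_sum_type, Fintype.sum_sum_type, G₂.degree_eq_sum_ite]
  simp only [subdivisionVertexJoin, ↓reduceIte, sum_const_zero, sum_const, card_univ, smul_eq_mul,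
    mul_one, zero_add]
  rfl

theorem forgottenIndex_subdivisionVertexJoin :
    forgottenIndex (subdivisionVertexJoin G₁ G₂) = forgottenIndex G₁
      + Fintype.card G₁.edgeSet * (2 + Fintype.card V₂ : ℤ) ^ 3
      + ∑ v, (Fintype.card G₁.edgeSet + G₂.degree v : ℤ) ^ 3 := by
  rw [forgottenIndex, forgottenIndex, Fintype.sum_sum_type, Fintype.sum_sum_type]
  simp only [degree_subdivisionVertexJoin_inl, degree_subdivisionVertexJoin_edge,
    degree_subdivisionVertexJoin_inr, sum_const, card_univ, nsmul_eq_mul]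
  push_cast
  ring

theorem forgottenIndex_subdivisionVertexJoin_of_isRegularOfDegree {d : ℕ}
    (h : G₂.IsRegularOfDegree d) :
    forgottenIndex (subdivisionVertexJoin G₁ G₂) = forgottenIndex G₁
      + Fintype.card G₁.edgeSet * (2 + Fintype.card V₂ : ℤ) ^ 3
      + Fintype.card V₂ * (Fintype.card G₁.edgeSet + d : ℤ) ^ 3 := by
  simp only [forgottenIndex_subdivisionVertexJoin, h.degree_eq, sum_const, card_univ,
    nsmul_eq_mul]

end SubdivisionVertexJoin

theorem forgottenIndex_subdivisionVertexJoin_path_cycle (l m : ℕ) (hl : 2 ≤ l) (hm : 3 ≤ m) :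
    forgottenIndex (subdivisionVertexJoin (SimpleGraph.pathGraph l) (SimpleGraph.cycleGraph m))
      = 8 * l - 14 + 8 * m + 12 * m * ((l : ℤ) - 1) + ((l : ℤ) - 1) * (2 + (m : ℤ)) ^ 3
        + 6 * m * ((l : ℤ) - 1) ^ 2 + m * ((l : ℤ) - 1) ^ 3 := by
  obtain ⟨n, rfl⟩ : ∃ n, l = n + 2 := ⟨l - 2, by omega⟩
  obtain ⟨k, rfl⟩ : ∃ k, m = k + 3 := ⟨m - 3, by omega⟩
  have hcycle : (SimpleGraph.cycleGraph (k + 3)).IsRegularOfDegree 2 :=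
    fun _ => SimpleGraph.cycleGraph_degree_three_le
  rw [forgottenIndex_subdivisionVertexJoin_of_isRegularOfDegree _ _ hcycle,
    SimpleGraph.forgottenIndex_pathGraph, SimpleGraph.card_edgeSet_pathGraph, Fintype.card_fin]
  push_cast
  ring
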